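/- In a DAG, if every path between vertices S and Y is blocked by a set W in the graph G with edge T → Y removed, and additionally every path from S to Y in G passing through the edge T → Y contains T as a collider or as a non-collider in W, then a path-based case analysis yields: every path between S and Y in G that avoids the edge T → Y is blocked by W in G whenever the descendant sets of all colliders on such paths are the same in G and G minus the edge T → Y. -/

import Mathlib

/-!
A path avoiding the edge `T → Y` (in both orientations) is also a path of the graph without
that edge, and along it the two graphs have the same edges, hence the same colliders and
non-colliders. So the vertex blocking it in the smaller graph blocks it in `G` too: a
non-collider in `W` stays one, and a collider with no descendant in `W` keeps that property
because its descendant sets agree in the two graphs.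
-/

variable {V : Type*}

/-- A relation is a DAG edge relation if it has no directed cycles of positive length. -/
def IsDAG (E : V → V → Prop) : Prop := ∀ v, ¬ Relation.TransGen E v v

/-- Adjacency: an edge in either orientation. -/
def EdgeAdj (E : V → V → Prop) (a b : V) : Prop := E a b ∨ E b a

/-- A (possibly undirected) path: a list of distinct vertices with consecutive vertices adjacent. -/
def PathOn (E : V → V → Prop) (p : List V) : Prop :=
  p.Chain' (EdgeAdj E) ∧ p.Nodup

/-- `DescOf E v u` : `u` is a descendant of `v` (directed path of length ≥ 0). -/
def DescOf (E : V → V → Prop) (v u : V) : Prop := Relation.ReflTransGen E v u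

/-- Pearl's blocking criterion: a path is blocked by `W` if some non-collider inner vertex
is in `W`, or some collider has neither itself nor any descendant in `W`. -/
def BlockedBy (E : V → V → Prop) (W : Set V) (p : List V) : Prop :=
  (∃ a b c, [a, b, c] <:+: p ∧ ¬(E a b ∧ E c b) ∧ b ∈ W) ∨
  (∃ a b c, [a, b, c] <:+: p ∧ E a b ∧ E c b ∧ ∀ d, DescOf E b d → d ∉ W)

/-- d-separation: every path between `u` and `v` is blocked by `W`. -/
def DSep (E : V → V → Prop) (W : Set V) (u v : V) : Prop :=
  ∀ p : List V, PathOn E p → p.head? = some u → p.getLast? = some v → BlockedBy E W p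

/-- d-connection: some path between `u` and `v` is not blocked by `W`. -/
def DConn (E : V → V → Prop) (W : Set V) (u v : V) : Prop :=
  ∃ p : List V, PathOn E p ∧ p.head? = some u ∧ p.getLast? = some v ∧ ¬ BlockedBy E W p

theorem List.IsChain.imp_of_infix {α : Type*} {R S : α → α → Prop} {l : List α}
    (H : ∀ a b, [a, b] <:+: l → R a b → S a b) (h : l.IsChain R) : l.IsChain S :=
  List.isChain_iff_forall_rel_of_append_cons_cons.2 fun a b l₁ l₂ hl =>
    H a b ⟨l₁, l₂, by simp [hl]⟩ (List.isChain_iff_forall_rel_of_append_cons_cons.1 h hl)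

def AgreeAlong (E E' : V → V → Prop) (p : List V) : Prop :=
  ∀ a b, [a, b] <:+: p → (E a b ↔ E' a b) ∧ (E b a ↔ E' b a)

section AgreeAlong

variable {E E' : V → V → Prop} {p : List V}

theorem AgreeAlong.of_deleteEdge {T Y : V} (hE' : ∀ a b, E' a b ↔ E a b ∧ ¬(a = T ∧ b = Y))
    (hTY : ¬ [T, Y] <:+: p) (hYT : ¬ [Y, T] <:+: p) : AgreeAlong E E' p := by
  intro a b hab
  simp only [hE']
  constructor
  · exact ⟨fun h => ⟨h, by rintro ⟨rfl, rfl⟩; exact hTY hab⟩, And.left⟩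
  · exact ⟨fun h => ⟨h, by rintro ⟨rfl, rfl⟩; exact hYT hab⟩, And.left⟩

theorem PathOn.of_agreeAlong (hagree : AgreeAlong E E' p) (hp : PathOn E p) : PathOn E' p :=
  ⟨hp.1.imp_of_infix fun a b hab => Or.imp (hagree a b hab).1.1 (hagree a b hab).2.1, hp.2⟩

theorem BlockedBy.of_agreeAlong {W : Set V} (hagree : AgreeAlong E E' p)
    (hdesc : ∀ a b c, [a, b, c] <:+: p → E a b → E c b → ∀ x, DescOf E b x ↔ DescOf E' b x)
    (hblocked : BlockedBy E' W p) : BlockedBy E W p := by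
  have hleft {a b c} (h : [a, b, c] <:+: p) : E a b ↔ E' a b :=
    (hagree a b (List.IsInfix.trans ⟨[], [c], rfl⟩ h)).1
  have hright {a b c} (h : [a, b, c] <:+: p) : E c b ↔ E' c b :=
    (hagree b c (List.IsInfix.trans ⟨[a], [], rfl⟩ h)).2
  rcases hblocked with ⟨a, b, c, h, hnc, hbW⟩ | ⟨a, b, c, h, hab, hcb, hdescW⟩
  · exact Or.inl ⟨a, b, c, h, by rwa [hleft h, hright h], hbW⟩
  · rw [← hleft h] at hab
    rw [← hright h] at hcb
    exact Or.inr ⟨a, b, c, h, hab, hcb, fun d hd => hdescW d ((hdesc a b c h hab hcb d).1 hd)⟩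

end AgreeAlong

theorem stmt11_general {V : Type*} (E : V → V → Prop) (S T Y : V)
    (E' : V → V → Prop) (hE' : ∀ a b, E' a b ↔ E a b ∧ ¬(a = T ∧ b = Y))
    (W : Set V)
    (h1 : DSep E' W S Y) :
    ∀ p : List V, PathOn E p → p.head? = some S → p.getLast? = some Y →
      ¬ [T, Y] <:+: p → ¬ [Y, T] <:+: p →
      (∀ a b c, [a, b, c] <:+: p → E a b → E c b → ∀ x, DescOf E b x ↔ DescOf E' b x) →
      BlockedBy E W p := by
  intro p hp hS hY hTY hYT hdesc
  have hagree : AgreeAlong E E' p := .of_deleteEdge hE' hTY hYT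
  exact (h1 p (hp.of_agreeAlong hagree) hS hY).of_agreeAlong hagree hdesc

/-- suppose every path between S and Y is blocked by W in the graph with the
edge T → Y removed, and every path from S to Y in G passing through the edge T → Y contains
T as a collider or as a non-collider in W. Then every path between S and Y in G that avoids
the edge T → Y is blocked by W in G, whenever the descendant sets of all colliders on such
paths are the same in G and in G minus the edge T → Y. -/
theorem stmt11 {V : Type*} (E : V → V → Prop) (h : IsDAG E) (S T Y : V) (hTY : E T Y)
    (E' : V → V → Prop) (hE' : ∀ a b, E' a b ↔ E a b ∧ ¬(a = T ∧ b = Y))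
    (W : Set V)
    (h1 : DSep E' W S Y)
    (h2 : ∀ p : List V, PathOn E p → p.head? = some S → p.getLast? = some Y →
      ([T, Y] <:+: p ∨ [Y, T] <:+: p) →
      ((∃ a c, [a, T, c] <:+: p ∧ E a T ∧ E c T) ∨
       (∃ a c, [a, T, c] <:+: p ∧ ¬(E a T ∧ E c T) ∧ T ∈ W))) :
    ∀ p : List V, PathOn E p → p.head? = some S → p.getLast? = some Y →
      ¬ [T, Y] <:+: p → ¬ [Y, T] <:+: p →
      (∀ a b c, [a, b, c] <:+: p → E a b → E c b → ∀ x, DescOf E b x ↔ DescOf E' b x) →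
      BlockedBy E W p :=
  stmt11_general E S T Y E' hE' W h1
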